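/- Let a < b, let f : ℝ → ℝ be twice continuously differentiable, let x₀ satisfy the initial-data conditions, let ε > 0, and let x be a classical solution of the ε-regularized problem such that in addition x_t is continuous on [a,b]×[0,∞) and has continuous partial derivatives ∂_u x_t, ∂_uu x_t and ∂_t x_t on (a,b)×(0,∞). Then the function t ↦ sup_{u∈[a,b]} |x_t(u,t)| is nonincreasing on [0,∞); in particular, for every t > 0 one has sup_{u∈[a,b]} |x_uu(u,t) − f(u)|/(x_u(u,t)² + ε) = sup_{u∈[a,b]} |x_t(u,t)| ≤ sup_{u∈[a,b]} |x₀''(u) − f(u)|/x₀'(u)². -/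

import Mathlib

/-!
Differentiating the equation in time shows that `w = x_t` solves the linear parabolic equation
`w_t = (w_uu - 2 x_u x_t w_u) / (x_u² + ε)`, and `w` vanishes at `u = a, b` because the boundary
values of `x` do not depend on `t`. The weak maximum principle, applied to `w` and `-w`, then makes
`sup_u |w(u, t)|` nonincreasing. At `t = 0` the equation (which extends to the parabolic boundary by
continuity) gives `|w| = |x₀'' - f| / (x₀'² + ε) ≤ |x₀'' - f| / x₀'²`.
-/

open Set MeasureTheory

/-- Initial-data conditions (\(\ref{cond:x0}\)) with explicit first and second
derivative witnesses `x₀'`, `x₀''` and Hölder exponent `β`. -/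
def InitDataW (a b : ℝ) (x₀ x₀' x₀'' : ℝ → ℝ) (β : ℝ) : Prop :=
  β ∈ Set.Ioo (0:ℝ) 1 ∧
  (∀ u ∈ Set.Icc a b, HasDerivWithinAt x₀ (x₀' u) (Set.Icc a b) u) ∧
  (∀ u ∈ Set.Icc a b, HasDerivWithinAt x₀' (x₀'' u) (Set.Icc a b) u) ∧
  ContinuousOn x₀'' (Set.Icc a b) ∧
  (∃ C : ℝ, ∀ u ∈ Set.Icc a b, ∀ v ∈ Set.Icc a b, |x₀'' u - x₀'' v| ≤ C * |u - v| ^ β) ∧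
  x₀ a = -1 ∧ x₀ b = 1 ∧ x₀'' a = a ∧ x₀'' b = b ∧
  (∀ u ∈ Set.Icc a b, 0 < x₀' u)

/-- A classical solution of the `ε`-regularized problem \eqref{xepseq}:
`x` is continuous on `[a,b] × [0,∞)` together with its partial derivatives
`x_u`, `x_uu` (within `[a,b]` in space) and `x_t` (within `[0,∞)` in time),
satisfies `x_t = (x_uu - f(u))/(x_u² + ε)` on `(a,b) × (0,∞)`, the boundary
conditions `x(a,t) = -1`, `x(b,t) = 1`, and `x(·,0) = x₀`. -/
def IsClassicalSolEps (a b ε : ℝ) (f x₀ : ℝ → ℝ) (x xu xuu xt : ℝ → ℝ → ℝ) : Prop :=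
  ContinuousOn (fun p : ℝ × ℝ => x p.1 p.2) (Set.Icc a b ×ˢ Set.Ici 0) ∧
  ContinuousOn (fun p : ℝ × ℝ => xu p.1 p.2) (Set.Icc a b ×ˢ Set.Ici 0) ∧
  ContinuousOn (fun p : ℝ × ℝ => xuu p.1 p.2) (Set.Icc a b ×ˢ Set.Ici 0) ∧
  ContinuousOn (fun p : ℝ × ℝ => xt p.1 p.2) (Set.Icc a b ×ˢ Set.Ici 0) ∧
  (∀ t : ℝ, 0 ≤ t → ∀ u ∈ Set.Icc a b,
      HasDerivWithinAt (fun v => x v t) (xu u t) (Set.Icc a b) u) ∧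
  (∀ t : ℝ, 0 ≤ t → ∀ u ∈ Set.Icc a b,
      HasDerivWithinAt (fun v => xu v t) (xuu u t) (Set.Icc a b) u) ∧
  (∀ u ∈ Set.Icc a b, ∀ t : ℝ, 0 ≤ t →
      HasDerivWithinAt (fun s => x u s) (xt u t) (Set.Ici 0) t) ∧
  (∀ u ∈ Set.Ioo a b, ∀ t : ℝ, 0 < t →
      xt u t = (xuu u t - f u) / ((xu u t) ^ 2 + ε)) ∧
  (∀ t : ℝ, 0 ≤ t → x a t = -1 ∧ x b t = 1) ∧
  (∀ u ∈ Set.Icc a b, x u 0 = x₀ u)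

open Filter Topology Interval

theorem IsLocalMax.hasDerivAt_deriv_nonpos {g g' : ℝ → ℝ} {u c : ℝ} (hmax : IsLocalMax g u)
    (hg : ∀ᶠ v in 𝓝 u, HasDerivAt g (g' v) v) (hg' : HasDerivAt g' c u) : c ≤ 0 := by
  -- for `c > 0` the second derivative test makes `u` a local minimum too, so `g` is locally
  -- constant and `c = 0`
  by_contra! hc
  have hderiv : deriv g =ᶠ[𝓝 u] g' := hg.mono fun v hv => hv.deriv
  have hmin : IsLocalMin g u :=
    isLocalMin_of_deriv_deriv_pos (by rwa [(hg'.congr_of_eventuallyEq hderiv).deriv])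
      hmax.deriv_eq_zero hg.self_of_nhds.continuousAt
  have hconst : g =ᶠ[𝓝 u] fun _ => g u := (hmax.and hmin).mono fun v hv => le_antisymm hv.1 hv.2
  have h0 : deriv g =ᶠ[𝓝 u] fun _ => 0 := by simpa using hconst.deriv
  have hc0 := (hasDerivAt_const u (0 : ℝ)).unique
    (hg'.congr_of_eventuallyEq (hderiv.symm.trans h0).symm)
  linarith

theorem IsMaxOn.hasDerivAt_nonneg {F : ℝ → ℝ} {s τ t d : ℝ} (hsτ : s < τ) (hτt : τ ≤ t)
    (hmax : IsMaxOn F (Icc s t) τ) (hd : HasDerivAt F d τ) : 0 ≤ d := by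
  have hseg : segment ℝ τ s ⊆ Icc s t := by
    rw [segment_symm, segment_eq_Icc hsτ.le]; exact Icc_subset_Icc le_rfl hτt
  have hleft := hmax.localize.hasFDerivWithinAt_nonpos hd.hasDerivWithinAt
    (sub_mem_posTangentConeAt_of_segment_subset hseg)
  simp only [ContinuousLinearMap.toSpanSingleton_apply, smul_eq_mul] at hleft
  exact nonneg_of_mul_nonpos_right hleft (sub_neg.mpr hsτ)

theorem hasDerivAt_intervalIntegral_of_continuousOn {h h' : ℝ → ℝ → ℝ} {u₀ r t₁ t₂ : ℝ}
    (hr : 0 < r) (ht : t₁ ≤ t₂)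
    (hh : ContinuousOn (fun p : ℝ × ℝ => h p.1 p.2) (Metric.closedBall u₀ r ×ˢ Icc t₁ t₂))
    (hh' : ContinuousOn (fun p : ℝ × ℝ => h' p.1 p.2) (Metric.closedBall u₀ r ×ˢ Icc t₁ t₂))
    (hderiv : ∀ u ∈ Metric.ball u₀ r, ∀ τ ∈ Icc t₁ t₂, HasDerivAt (h · τ) (h' u τ) u) :
    HasDerivAt (fun u => ∫ τ in t₁..t₂, h u τ) (∫ τ in t₁..t₂, h' u₀ τ) u₀ := by
  obtain ⟨C, hC⟩ :=
    ((isCompact_closedBall u₀ r).prod isCompact_Icc).exists_bound_of_continuousOn hh'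
  have hu₀ : u₀ ∈ Metric.closedBall u₀ r := Metric.mem_closedBall_self hr.le
  have hIoc : Ι t₁ t₂ ⊆ Icc t₁ t₂ := by rw [uIoc_of_le ht]; exact Ioc_subset_Icc_self
  have hmeas : ∀ {k : ℝ → ℝ}, ContinuousOn k (Icc t₁ t₂) →
      AEStronglyMeasurable k (volume.restrict (Ι t₁ t₂)) := fun hk =>
    (hk.mono hIoc).aestronglyMeasurable measurableSet_uIoc
  refine (intervalIntegral.hasDerivAt_integral_of_dominated_loc_of_deriv_le (bound := fun _ => C)
    (Metric.ball_mem_nhds u₀ hr) ?_ ?_ (hmeas (hh'.uncurry_left u₀ hu₀)) ?_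
    intervalIntegrable_const ?_).2
  · filter_upwards [Metric.ball_mem_nhds u₀ hr] with u hu
    exact hmeas (hh.uncurry_left u (Metric.ball_subset_closedBall hu))
  · exact (hh.uncurry_left u₀ hu₀).intervalIntegrable_of_Icc ht
  · exact ae_of_all _ fun τ hτ u hu =>
      hC (u, τ) ⟨Metric.ball_subset_closedBall hu, hIoc hτ⟩
  · exact ae_of_all _ fun τ hτ u hu => hderiv u hu τ (hIoc hτ)

theorem hasDerivAt_partial_comm {g gu h hu : ℝ → ℝ → ℝ} {U T : Set ℝ} (hU : IsOpen U)
    (hT : IsOpen T)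
    (hg_t : ∀ u ∈ U, ∀ t ∈ T, HasDerivAt (g u ·) (h u t) t)
    (hg_u : ∀ u ∈ U, ∀ t ∈ T, HasDerivAt (g · t) (gu u t) u)
    (hh_u : ∀ u ∈ U, ∀ t ∈ T, HasDerivAt (h · t) (hu u t) u)
    (hh : ContinuousOn (fun p : ℝ × ℝ => h p.1 p.2) (U ×ˢ T))
    (hhu : ContinuousOn (fun p : ℝ × ℝ => hu p.1 p.2) (U ×ˢ T))
    {u₀ t₀ : ℝ} (hu₀ : u₀ ∈ U) (ht₀ : t₀ ∈ T) :
    HasDerivAt (gu u₀ ·) (hu u₀ t₀) t₀ := by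
  obtain ⟨r₁, hr₁, hU₁⟩ := Metric.nhds_basis_closedBall.mem_iff.mp (hU.mem_nhds hu₀)
  obtain ⟨r₂, hr₂, hT₂⟩ := Metric.nhds_basis_closedBall.mem_iff.mp (hT.mem_nhds ht₀)
  set r := min r₁ r₂
  have hr : 0 < r := lt_min hr₁ hr₂
  have hUr : Metric.closedBall u₀ r ⊆ U :=
    (Metric.closedBall_subset_closedBall (min_le_left _ _)).trans hU₁
  have hTr : Icc (t₀ - r) (t₀ + r) ⊆ T := by
    rw [← Real.closedBall_eq_Icc]
    exact (Metric.closedBall_subset_closedBall (min_le_right _ _)).trans hT₂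
  have hsub : ∀ {t}, t ∈ Icc (t₀ - r) (t₀ + r) →
      Metric.closedBall u₀ r ×ˢ Icc (t₀ - r) t ⊆ U ×ˢ T := fun ht =>
    prod_mono hUr ((Icc_subset_Icc_right ht.2).trans hTr)
  have hu₀r : u₀ ∈ Metric.closedBall u₀ r := Metric.mem_closedBall_self hr.le
  have hg_eq : ∀ u ∈ Metric.closedBall u₀ r, ∀ t ∈ Icc (t₀ - r) (t₀ + r),
      g u t = g u (t₀ - r) + ∫ τ in (t₀ - r)..t, h u τ := by
    intro u hu t ht
    have hI : uIcc (t₀ - r) t ⊆ T := by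
      rw [uIcc_of_le ht.1]; exact (Icc_subset_Icc_right ht.2).trans hTr
    rw [intervalIntegral.integral_eq_sub_of_hasDerivAt (fun τ hτ => hg_t u (hUr hu) τ (hI hτ))
      ((hh.uncurry_left u (hUr hu)).mono hI).intervalIntegrable]
    ring
  have hgu_eq : ∀ t ∈ Icc (t₀ - r) (t₀ + r),
      gu u₀ t = gu u₀ (t₀ - r) + ∫ τ in (t₀ - r)..t, hu u₀ τ := by
    intro t ht
    have hRHS := (hg_u u₀ hu₀ (t₀ - r) (hTr ⟨le_rfl, by linarith⟩)).add
      (hasDerivAt_intervalIntegral_of_continuousOn hr ht.1 (hh.mono (hsub ht)) (hhu.mono (hsub ht))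
        fun u hu τ hτ => hh_u u (hUr (Metric.ball_subset_closedBall hu)) τ
          (hTr ⟨hτ.1, hτ.2.trans ht.2⟩))
    exact (hg_u u₀ hu₀ t (hTr ht)).unique (hRHS.congr_of_eventuallyEq
      (eventually_of_mem (Metric.closedBall_mem_nhds u₀ hr) fun u hu => hg_eq u hu t ht))
  have hcont : ContinuousOn (hu u₀) T := hhu.uncurry_left u₀ hu₀
  have hI₀ : uIcc (t₀ - r) t₀ ⊆ T := by
    rw [uIcc_of_le (by linarith)]; exact (Icc_subset_Icc_right (by linarith)).trans hTr
  have hderiv := (intervalIntegral.integral_hasDerivAt_right (hcont.mono hI₀).intervalIntegrable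
    (hcont.stronglyMeasurableAtFilter hT t₀ ht₀) (hcont.continuousAt (hT.mem_nhds ht₀))).const_add
    (gu u₀ (t₀ - r))
  exact hderiv.congr_of_eventuallyEq (eventually_of_mem
    (Icc_mem_nhds (by linarith) (by linarith)) hgu_eq)

section MaximumPrinciple

variable {a b s t K : ℝ} {W Wu Wuu Wt A B : ℝ → ℝ → ℝ}

theorem le_of_strict_subsolution
    (hWc : ContinuousOn (fun p : ℝ × ℝ => W p.1 p.2) (Icc a b ×ˢ Icc s t))
    (hWu : ∀ u ∈ Ioo a b, ∀ τ ∈ Ioc s t, HasDerivAt (W · τ) (Wu u τ) u)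
    (hWuu : ∀ u ∈ Ioo a b, ∀ τ ∈ Ioc s t, HasDerivAt (Wu · τ) (Wuu u τ) u)
    (hWt : ∀ u ∈ Ioo a b, ∀ τ ∈ Ioc s t, HasDerivAt (W u ·) (Wt u τ) τ)
    (hA : ∀ u ∈ Ioo a b, ∀ τ ∈ Ioc s t, 0 ≤ A u τ)
    (hsub : ∀ u ∈ Ioo a b, ∀ τ ∈ Ioc s t, Wt u τ < A u τ * Wuu u τ + B u τ * Wu u τ)
    (hbot : ∀ u ∈ Icc a b, W u s ≤ K) (hlat : ∀ τ ∈ Icc s t, W a τ ≤ K ∧ W b τ ≤ K) :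
    ∀ u ∈ Icc a b, ∀ τ ∈ Icc s t, W u τ ≤ K := by
  intro u hu τ hτ
  obtain ⟨⟨u₀, τ₀⟩, ⟨hu₀, hτ₀⟩, hmax⟩ :=
    (isCompact_Icc.prod isCompact_Icc).exists_isMaxOn ⟨(u, τ), hu, hτ⟩ hWc
  replace hmax : ∀ v ∈ Icc a b, ∀ σ ∈ Icc s t, W v σ ≤ W u₀ τ₀ :=
    fun v hv σ hσ => isMaxOn_iff.mp hmax (v, σ) ⟨hv, hσ⟩
  refine (hmax u hu τ hτ).trans (not_lt.mp fun hK => ?_)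
  have hsτ₀ : s < τ₀ := hτ₀.1.lt_of_ne fun h => (hbot u₀ hu₀).not_gt (h ▸ hK)
  have hau₀ : a < u₀ := hu₀.1.lt_of_ne fun h => (hlat τ₀ hτ₀).1.not_gt (h ▸ hK)
  have hu₀b : u₀ < b := hu₀.2.lt_of_ne fun h => (hlat τ₀ hτ₀).2.not_gt (h ▸ hK)
  have hu₀' : u₀ ∈ Ioo a b := ⟨hau₀, hu₀b⟩
  have hτ₀' : τ₀ ∈ Ioc s t := ⟨hsτ₀, hτ₀.2⟩
  have hloc : IsLocalMax (W · τ₀) u₀ := by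
    filter_upwards [isOpen_Ioo.mem_nhds hu₀'] with v hv
    exact hmax v (Ioo_subset_Icc_self hv) τ₀ hτ₀
  have hWu₀ : Wu u₀ τ₀ = 0 := hloc.hasDerivAt_eq_zero (hWu u₀ hu₀' τ₀ hτ₀')
  have hWuu₀ : Wuu u₀ τ₀ ≤ 0 := hloc.hasDerivAt_deriv_nonpos
    (eventually_of_mem (isOpen_Ioo.mem_nhds hu₀') fun v hv => hWu v hv τ₀ hτ₀')
    (hWuu u₀ hu₀' τ₀ hτ₀')
  have hWt₀ : 0 ≤ Wt u₀ τ₀ := IsMaxOn.hasDerivAt_nonneg hsτ₀ hτ₀.2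
    (isMaxOn_iff.mpr fun σ hσ => hmax u₀ hu₀ σ hσ) (hWt u₀ hu₀' τ₀ hτ₀')
  have hsub₀ := hsub u₀ hu₀' τ₀ hτ₀'
  rw [hWu₀, mul_zero, add_zero] at hsub₀
  linarith [mul_nonpos_of_nonneg_of_nonpos (hA u₀ hu₀' τ₀ hτ₀') hWuu₀]

theorem le_of_subsolution
    (hWc : ContinuousOn (fun p : ℝ × ℝ => W p.1 p.2) (Icc a b ×ˢ Icc s t))
    (hWu : ∀ u ∈ Ioo a b, ∀ τ ∈ Ioc s t, HasDerivAt (W · τ) (Wu u τ) u)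
    (hWuu : ∀ u ∈ Ioo a b, ∀ τ ∈ Ioc s t, HasDerivAt (Wu · τ) (Wuu u τ) u)
    (hWt : ∀ u ∈ Ioo a b, ∀ τ ∈ Ioc s t, HasDerivAt (W u ·) (Wt u τ) τ)
    (hA : ∀ u ∈ Ioo a b, ∀ τ ∈ Ioc s t, 0 ≤ A u τ)
    (hsub : ∀ u ∈ Ioo a b, ∀ τ ∈ Ioc s t, Wt u τ ≤ A u τ * Wuu u τ + B u τ * Wu u τ)
    (hbot : ∀ u ∈ Icc a b, W u s ≤ K) (hlat : ∀ τ ∈ Icc s t, W a τ ≤ K ∧ W b τ ≤ K) :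
    ∀ u ∈ Icc a b, ∀ τ ∈ Icc s t, W u τ ≤ K := by
  intro u hu τ hτ
  -- `W - δ (τ - s)` is a strict subsolution with the same bound on the parabolic boundary
  have hperturbed : ∀ δ > 0, W u τ ≤ K + δ * (τ - s) := by
    intro δ hδ
    have hV := le_of_strict_subsolution (W := fun v σ => W v σ - δ * (σ - s))
      (Wt := fun v σ => Wt v σ - δ) (A := A) (B := B) (hWc.sub (by fun_prop))
      (fun v hv σ hσ => (hWu v hv σ hσ).sub_const _) hWuu
      (fun v hv σ hσ => ((hWt v hv σ hσ).sub
        (((hasDerivAt_id σ).sub_const s).const_mul δ)).congr_deriv (by simp))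
      hA (fun v hv σ hσ => by linarith [hsub v hv σ hσ])
      (fun v hv => by simpa using hbot v hv)
      (fun σ hσ => by
        have hδσ := mul_nonneg hδ.le (sub_nonneg.mpr hσ.1)
        exact ⟨by linarith [(hlat σ hσ).1], by linarith [(hlat σ hσ).2]⟩) u hu τ hτ
    linarith
  refine ge_of_tendsto (x := 𝓝[>] 0) ?_ (eventually_nhdsWithin_of_forall hperturbed)
  exact ((continuous_const.add (continuous_id.mul continuous_const)).tendsto' 0 K
    (by simp) : Tendsto (fun δ : ℝ => K + δ * (τ - s)) (𝓝 0) (𝓝 K)).mono_left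
    (nhdsWithin_le_nhds (s := Ioi 0))

theorem abs_le_of_solution
    (hWc : ContinuousOn (fun p : ℝ × ℝ => W p.1 p.2) (Icc a b ×ˢ Icc s t))
    (hWu : ∀ u ∈ Ioo a b, ∀ τ ∈ Ioc s t, HasDerivAt (W · τ) (Wu u τ) u)
    (hWuu : ∀ u ∈ Ioo a b, ∀ τ ∈ Ioc s t, HasDerivAt (Wu · τ) (Wuu u τ) u)
    (hWt : ∀ u ∈ Ioo a b, ∀ τ ∈ Ioc s t, HasDerivAt (W u ·) (Wt u τ) τ)
    (hA : ∀ u ∈ Ioo a b, ∀ τ ∈ Ioc s t, 0 ≤ A u τ)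
    (heq : ∀ u ∈ Ioo a b, ∀ τ ∈ Ioc s t, Wt u τ = A u τ * Wuu u τ + B u τ * Wu u τ)
    (hbot : ∀ u ∈ Icc a b, |W u s| ≤ K) (hlat : ∀ τ ∈ Icc s t, |W a τ| ≤ K ∧ |W b τ| ≤ K) :
    ∀ u ∈ Icc a b, ∀ τ ∈ Icc s t, |W u τ| ≤ K := by
  intro u hu τ hτ
  have hle := le_of_subsolution hWc hWu hWuu hWt hA (fun v hv σ hσ => (heq v hv σ hσ).le)
    (fun v hv => (le_abs_self _).trans (hbot v hv))
    (fun σ hσ => ⟨(le_abs_self _).trans (hlat σ hσ).1, (le_abs_self _).trans (hlat σ hσ).2⟩)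
  have hge := le_of_subsolution (W := fun v σ => -W v σ) (Wu := fun v σ => -Wu v σ)
    (Wuu := fun v σ => -Wuu v σ) (Wt := fun v σ => -Wt v σ) (A := A) (B := B) hWc.neg
    (fun v hv σ hσ => (hWu v hv σ hσ).neg) (fun v hv σ hσ => (hWuu v hv σ hσ).neg)
    (fun v hv σ hσ => (hWt v hv σ hσ).neg) hA
    (fun v hv σ hσ => le_of_eq (by rw [heq v hv σ hσ]; ring))
    (fun v hv => (neg_le_abs _).trans (hbot v hv))
    (fun σ hσ => ⟨(neg_le_abs _).trans (hlat σ hσ).1, (neg_le_abs _).trans (hlat σ hσ).2⟩)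
  exact abs_le.mpr ⟨neg_le.mp (hge u hu τ hτ), hle u hu τ hτ⟩

end MaximumPrinciple

theorem InitDataW.bddAbove_ratio {a b β : ℝ} {f x₀ x₀' x₀'' : ℝ → ℝ}
    (h₀ : InitDataW a b x₀ x₀' x₀'' β) (hf : Continuous f) :
    BddAbove ((fun u => |x₀'' u - f u| / x₀' u ^ 2) '' Icc a b) := by
  obtain ⟨-, -, hx₀', hx₀''c, -, -, -, -, -, hpos⟩ := h₀
  have hx₀'c : ContinuousOn x₀' (Icc a b) := fun u hu => (hx₀' u hu).continuousWithinAt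
  exact isCompact_Icc.bddAbove_image <| ((hx₀''c.sub hf.continuousOn).abs).div (hx₀'c.pow 2)
    fun u hu => (pow_pos (hpos u hu) 2).ne'

namespace IsClassicalSolEps

variable {a b ε : ℝ} {f x₀ : ℝ → ℝ} {x xu xuu xt : ℝ → ℝ → ℝ}

theorem hasDerivAt_xu (hsol : IsClassicalSolEps a b ε f x₀ x xu xuu xt) {u t : ℝ}
    (hu : u ∈ Ioo a b) (ht : 0 ≤ t) : HasDerivAt (x · t) (xu u t) u :=
  (hsol.2.2.2.2.1 t ht u (Ioo_subset_Icc_self hu)).hasDerivAt (Icc_mem_nhds hu.1 hu.2)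

theorem hasDerivAt_xuu (hsol : IsClassicalSolEps a b ε f x₀ x xu xuu xt) {u t : ℝ}
    (hu : u ∈ Ioo a b) (ht : 0 ≤ t) : HasDerivAt (xu · t) (xuu u t) u :=
  (hsol.2.2.2.2.2.1 t ht u (Ioo_subset_Icc_self hu)).hasDerivAt (Icc_mem_nhds hu.1 hu.2)

theorem hasDerivAt_xt (hsol : IsClassicalSolEps a b ε f x₀ x xu xuu xt) {u t : ℝ}
    (hu : u ∈ Icc a b) (ht : 0 < t) : HasDerivAt (x u ·) (xt u t) t :=
  (hsol.2.2.2.2.2.2.1 u hu t ht.le).hasDerivAt (Ici_mem_nhds ht)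

theorem xt_boundary_eq_zero (hsol : IsClassicalSolEps a b ε f x₀ x xu xuu xt) (hab : a ≤ b) {t : ℝ}
    (ht : 0 ≤ t) : xt a t = 0 ∧ xt b t = 0 := by
  obtain ⟨-, -, -, -, -, -, hxt, -, hbc, -⟩ := hsol
  have hconst : ∀ c ∈ Icc a b, ∀ k : ℝ, (∀ s ≥ 0, x c s = k) → xt c t = 0 := fun c hc k hk =>
    (uniqueDiffOn_Ici 0 t ht).eq_deriv _ (hxt c hc t ht)
      ((hasDerivWithinAt_const t _ k).congr (fun s hs => hk s hs) (hk t ht))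
  exact ⟨hconst a ⟨le_rfl, hab⟩ (-1) fun s hs => (hbc s hs).1,
    hconst b ⟨hab, le_rfl⟩ 1 fun s hs => (hbc s hs).2⟩

theorem xt_eqOn (hsol : IsClassicalSolEps a b ε f x₀ x xu xuu xt) (hab : a < b) (hε : 0 < ε)
    (hf : Continuous f) :
    EqOn (fun p : ℝ × ℝ => xt p.1 p.2)
      (fun p => (xuu p.1 p.2 - f p.1) / (xu p.1 p.2 ^ 2 + ε)) (Icc a b ×ˢ Ici 0) := by
  obtain ⟨-, hxuc, hxuuc, hxtc, -, -, -, hpde, -, -⟩ := hsol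
  refine EqOn.of_subset_closure (s := Ioo a b ×ˢ Ioi 0) (fun p hp => hpde p.1 hp.1 p.2 hp.2) hxtc
    ((hxuuc.sub (hf.comp continuous_fst).continuousOn).div ((hxuc.pow 2).add continuousOn_const)
      fun p _ => by positivity)
    (prod_mono Ioo_subset_Icc_self Ioi_subset_Ici_self) ?_
  rw [closure_prod_eq, closure_Ioo hab.ne, closure_Ioi]

theorem xu_zero (hsol : IsClassicalSolEps a b ε f x₀ x xu xuu xt) (hab : a < b)
    {x₀' x₀'' : ℝ → ℝ} {β : ℝ} (h₀ : InitDataW a b x₀ x₀' x₀'' β) {u : ℝ} (hu : u ∈ Icc a b) :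
    xu u 0 = x₀' u := by
  obtain ⟨-, -, -, -, hxu, -, -, -, -, hinit⟩ := hsol
  exact (uniqueDiffOn_Icc hab u hu).eq_deriv _
    ((hxu 0 le_rfl u hu).congr (fun _ hv => (hinit _ hv).symm) (hinit u hu).symm) (h₀.2.1 u hu)

theorem xuu_zero (hsol : IsClassicalSolEps a b ε f x₀ x xu xuu xt) (hab : a < b)
    {x₀' x₀'' : ℝ → ℝ} {β : ℝ} (h₀ : InitDataW a b x₀ x₀' x₀'' β) {u : ℝ} (hu : u ∈ Icc a b) :
    xuu u 0 = x₀'' u :=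
  (uniqueDiffOn_Icc hab u hu).eq_deriv _
    ((hsol.2.2.2.2.2.1 0 le_rfl u hu).congr (fun _ hv => (hsol.xu_zero hab h₀ hv).symm)
      (hsol.xu_zero hab h₀ hu).symm) (h₀.2.2.1 u hu)

theorem abs_xt_zero (hsol : IsClassicalSolEps a b ε f x₀ x xu xuu xt) (hab : a < b)
    (hε : 0 < ε) (hf : Continuous f) {x₀' x₀'' : ℝ → ℝ} {β : ℝ}
    (h₀ : InitDataW a b x₀ x₀' x₀'' β) {u : ℝ} (hu : u ∈ Icc a b) :
    |xt u 0| ≤ |x₀'' u - f u| / x₀' u ^ 2 := by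
  have hxt := hsol.xt_eqOn hab hε hf (show (u, 0) ∈ Icc a b ×ˢ Ici 0 from ⟨hu, self_mem_Ici⟩)
  dsimp only at hxt
  rw [hxt, hsol.xu_zero hab h₀ hu, hsol.xuu_zero hab h₀ hu,
    abs_div, abs_of_pos (a := x₀' u ^ 2 + ε) (by positivity)]
  obtain ⟨-, -, -, -, -, -, -, -, -, hpos⟩ := h₀
  have hx₀'u := hpos u hu
  exact div_le_div_of_nonneg_left (abs_nonneg _) (by positivity) (by linarith)

theorem xtt_eq (hsol : IsClassicalSolEps a b ε f x₀ x xu xuu xt) (hε : 0 < ε)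
    {xtu xtuu xtt : ℝ → ℝ → ℝ}
    (hxtu : ∀ t : ℝ, 0 < t → ∀ u ∈ Ioo a b, HasDerivAt (fun v => xt v t) (xtu u t) u)
    (hxtuu : ∀ t : ℝ, 0 < t → ∀ u ∈ Ioo a b, HasDerivAt (fun v => xtu v t) (xtuu u t) u)
    (hxtt : ∀ u ∈ Ioo a b, ∀ t : ℝ, 0 < t → HasDerivAt (fun s => xt u s) (xtt u t) t)
    (hcxtu : ContinuousOn (fun p : ℝ × ℝ => xtu p.1 p.2) (Ioo a b ×ˢ Ioi 0))
    (hcxtuu : ContinuousOn (fun p : ℝ × ℝ => xtuu p.1 p.2) (Ioo a b ×ˢ Ioi 0))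
    {u t : ℝ} (hu : u ∈ Ioo a b) (ht : 0 < t) :
    xtt u t = (xu u t ^ 2 + ε)⁻¹ * xtuu u t
      + -(2 * xu u t * xt u t) / (xu u t ^ 2 + ε) * xtu u t := by
  have hxtc := hsol.2.2.2.1
  have hpde := hsol.2.2.2.2.2.2.2.1
  have hxu_t : ∀ u ∈ Ioo a b, ∀ t ∈ Ioi (0 : ℝ), HasDerivAt (xu u ·) (xtu u t) t :=
    fun u hu t ht => hasDerivAt_partial_comm isOpen_Ioo isOpen_Ioi
      (fun u hu t ht => hsol.hasDerivAt_xt (Ioo_subset_Icc_self hu) ht)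
      (fun u hu t ht => hsol.hasDerivAt_xu hu (le_of_lt ht)) (fun u hu t ht => hxtu t ht u hu)
      (hxtc.mono (prod_mono Ioo_subset_Icc_self Ioi_subset_Ici_self)) hcxtu hu ht
  have hxuu_t : HasDerivAt (xuu u ·) (xtuu u t) t :=
    hasDerivAt_partial_comm isOpen_Ioo isOpen_Ioi hxu_t
      (fun u hu t ht => hsol.hasDerivAt_xuu hu (le_of_lt ht)) (fun u hu t ht => hxtuu t ht u hu)
      hcxtu hcxtuu hu ht
  have hD : 0 < xu u t ^ 2 + ε := by positivity
  have hquot :=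
    (hxuu_t.sub_const (f u)).fun_div (((hxu_t u hu t ht).fun_pow 2).add_const ε) hD.ne'
  rw [(hxtt u hu t ht).unique (hquot.congr_of_eventuallyEq (eventually_of_mem (Ioi_mem_nhds ht)
    fun s hs => hpde u hu s hs)), hpde u hu t ht]
  field_simp
  ring

theorem antitoneOn_sSup_abs_xt (hsol : IsClassicalSolEps a b ε f x₀ x xu xuu xt) (hab : a ≤ b)
    (hε : 0 < ε) {xtu xtuu xtt : ℝ → ℝ → ℝ}
    (hxtu : ∀ t : ℝ, 0 < t → ∀ u ∈ Ioo a b, HasDerivAt (fun v => xt v t) (xtu u t) u)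
    (hxtuu : ∀ t : ℝ, 0 < t → ∀ u ∈ Ioo a b, HasDerivAt (fun v => xtu v t) (xtuu u t) u)
    (hxtt : ∀ u ∈ Ioo a b, ∀ t : ℝ, 0 < t → HasDerivAt (fun s => xt u s) (xtt u t) t)
    (hcxtu : ContinuousOn (fun p : ℝ × ℝ => xtu p.1 p.2) (Ioo a b ×ˢ Ioi 0))
    (hcxtuu : ContinuousOn (fun p : ℝ × ℝ => xtuu p.1 p.2) (Ioo a b ×ˢ Ioi 0)) :
    AntitoneOn (fun t => sSup ((fun u => |xt u t|) '' Icc a b)) (Ici 0) := by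
  have hxtc := hsol.2.2.2.1
  intro s hs t _ hst
  have hbdd : BddAbove ((fun u => |xt u s|) '' Icc a b) :=
    isCompact_Icc.bddAbove_image (hxtc.uncurry_right s hs).abs
  have hsup_nonneg : 0 ≤ sSup ((fun u => |xt u s|) '' Icc a b) :=
    le_csSup_of_le hbdd ⟨a, left_mem_Icc.mpr hab, rfl⟩ (abs_nonneg _)
  have hpos : ∀ τ ∈ Ioc s t, 0 < τ := fun τ hτ => lt_of_le_of_lt hs hτ.1
  refine csSup_le ((nonempty_Icc.mpr hab).image _) ?_
  rintro _ ⟨u, hu, rfl⟩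
  exact abs_le_of_solution
    (hxtc.mono (prod_mono subset_rfl fun τ hτ => mem_Ici.mpr (hs.trans hτ.1)))
    (fun v hv τ hτ => hxtu τ (hpos τ hτ) v hv) (fun v hv τ hτ => hxtuu τ (hpos τ hτ) v hv)
    (fun v hv τ hτ => hxtt v hv τ (hpos τ hτ)) (fun _ _ _ _ => by positivity)
    (fun v hv τ hτ => hsol.xtt_eq hε hxtu hxtuu hxtt hcxtu hcxtuu hv (hpos τ hτ))
    (fun v hv => le_csSup hbdd ⟨v, hv, rfl⟩)
    (fun τ hτ => by simp [hsol.xt_boundary_eq_zero hab (hs.trans hτ.1), hsup_nonneg])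
    u hu t ⟨hst, le_rfl⟩

end IsClassicalSolEps

theorem lem_bound_xet (a b : ℝ) (hab : a < b) (f : ℝ → ℝ) (hf : ContDiff ℝ 2 f)
    (x₀ x₀' x₀'' : ℝ → ℝ) (β : ℝ) (h₀ : InitDataW a b x₀ x₀' x₀'' β)
    (ε : ℝ) (hε : 0 < ε) (x xu xuu xt : ℝ → ℝ → ℝ)
    (hsol : IsClassicalSolEps a b ε f x₀ x xu xuu xt)
    (xtu xtuu xtt : ℝ → ℝ → ℝ)
    (hxtu : ∀ t : ℝ, 0 < t → ∀ u ∈ Set.Ioo a b,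
      HasDerivAt (fun v => xt v t) (xtu u t) u)
    (hxtuu : ∀ t : ℝ, 0 < t → ∀ u ∈ Set.Ioo a b,
      HasDerivAt (fun v => xtu v t) (xtuu u t) u)
    (hxtt : ∀ u ∈ Set.Ioo a b, ∀ t : ℝ, 0 < t →
      HasDerivAt (fun s => xt u s) (xtt u t) t)
    (hcxtu : ContinuousOn (fun p : ℝ × ℝ => xtu p.1 p.2) (Set.Ioo a b ×ˢ Set.Ioi 0))
    (hcxtuu : ContinuousOn (fun p : ℝ × ℝ => xtuu p.1 p.2) (Set.Ioo a b ×ˢ Set.Ioi 0)) :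
    AntitoneOn (fun t => sSup ((fun u => |xt u t|) '' Set.Icc a b)) (Set.Ici 0) ∧
    ∀ t : ℝ, 0 < t →
      sSup ((fun u => |xuu u t - f u| / ((xu u t) ^ 2 + ε)) '' Set.Icc a b)
        = sSup ((fun u => |xt u t|) '' Set.Icc a b) ∧
      sSup ((fun u => |xt u t|) '' Set.Icc a b)
        ≤ sSup ((fun u => |x₀'' u - f u| / (x₀' u) ^ 2) '' Set.Icc a b) := by
  have hfc : Continuous f := hf.continuous
  have hanti := hsol.antitoneOn_sSup_abs_xt hab.le hε hxtu hxtuu hxtt hcxtu hcxtuu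
  refine ⟨hanti, fun t ht => ⟨congrArg sSup (image_congr fun u hu => ?_), ?_⟩⟩
  · have hxt := hsol.xt_eqOn hab hε hfc (show (u, t) ∈ Icc a b ×ˢ Ici 0 from ⟨hu, ht.le⟩)
    dsimp only at hxt
    rw [hxt, abs_div, abs_of_pos (a := xu u t ^ 2 + ε) (by positivity)]
  · refine (hanti self_mem_Ici ht.le ht.le).trans (csSup_le ((nonempty_Icc.mpr hab.le).image _) ?_)
    rintro _ ⟨u, hu, rfl⟩
    exact le_csSup_of_le (h₀.bddAbove_ratio hfc) ⟨u, hu, rfl⟩ (hsol.abs_xt_zero hab hε hfc h₀ hu)
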